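/- arXiv:2509.13962 — 2 statements merged into one kernel-verified Lean document; each statement's English description precedes it below -/
import Mathlib

section
/- Let (λ_n)_{n≥1} and (μ_n)_{n≥1} be sequences of reals with λ_n < μ_n for all n, λ_n strictly increasing and tending to +∞, and let (x_n), (y_n) be sequences of vectors in ℝ² with Σ_n |x_n| e^{-λ_n t} < ∞ and Σ_n |y_n| e^{-μ_n t} < ∞ for all t > 0. If |Σ_{n≥1} e^{-λ_n t} x_n| = |Σ_{n≥1} e^{-μ_n t} y_n| for all t in an unbounded set of positive reals, and if Σ_n |x_n| e^{-(λ_n − λ_1)t} → |x_1| as t → ∞, then x_1 = 0. -/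
open Filter in
theorem leading_coefficient_vanishes
    (lam μ : ℕ → ℝ) (x y : ℕ → EuclideanSpace ℝ (Fin 2))
    (hlt : ∀ n, lam n < μ n)
    (hmono : StrictMono lam)
    (htop : Tendsto lam atTop atTop)
    (hsumx : ∀ t : ℝ, 0 < t → Summable (fun n => ‖x n‖ * Real.exp (-lam n * t)))
    (hsumy : ∀ t : ℝ, 0 < t → Summable (fun n => ‖y n‖ * Real.exp (-μ n * t)))
    (S : Set ℝ) (hS : S ⊆ Set.Ioi 0) (hSunb : ∀ T : ℝ, ∃ t ∈ S, T < t)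
    (heq : ∀ t ∈ S,
      ‖∑' n : ℕ, Real.exp (-lam n * t) • x n‖ = ‖∑' n : ℕ, Real.exp (-μ n * t) • y n‖)
    (hconv : Tendsto (fun t : ℝ => ∑' n : ℕ, ‖x n‖ * Real.exp (-(lam n - lam 0) * t))
      atTop (nhds ‖x 0‖)) :
    x 0 = 0 := by
  set c : ℝ := min (μ 0) (lam 1) with hc
  have hc0 : lam 0 < c := lt_min (hlt 0) (hmono Nat.zero_lt_one)
  have hcμ : ∀ n, c ≤ μ n := by
    intro n
    rcases Nat.eq_zero_or_pos n with h | h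
    · subst h; exact min_le_left _ _
    · exact le_trans (min_le_right _ _)
        (le_of_lt (lt_of_le_of_lt (hmono.le_iff_le.mpr h) (hlt n)))
  set C : ℝ := ∑' n : ℕ, ‖y n‖ * Real.exp (-μ n * 1) with hC
  set D : ℝ := C * Real.exp c with hD
  set g : ℝ → ℝ := fun t => ∑' n : ℕ, ‖x n‖ * Real.exp (-(lam n - lam 0) * t) with hg
  -- the key pointwise inequality
  have key : ∀ t ∈ S, 1 ≤ t →
      2 * ‖x 0‖ ≤ D * Real.exp ((lam 0 - c) * t) + g t := by
    intro t htS ht1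
    have ht0 : (0 : ℝ) < t := hS htS
    have sx : Summable (fun n => ‖x n‖ * Real.exp (-lam n * t)) := hsumx t ht0
    have sxv : Summable (fun n => Real.exp (-lam n * t) • x n) := by
      apply Summable.of_norm
      simpa [norm_smul, Real.abs_exp, mul_comm] using sx
    have sy1 : Summable (fun n => ‖y n‖ * Real.exp (-μ n * 1)) := hsumy 1 one_pos
    have syt : Summable (fun n => ‖y n‖ * Real.exp (-μ n * t)) := hsumy t ht0
    have syv : Summable (fun n => Real.exp (-μ n * t) • y n) := by
      apply Summable.of_norm
      simpa [norm_smul, Real.abs_exp, mul_comm] using syt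
    -- split the x-sum
    have hsplit : (∑' n : ℕ, Real.exp (-lam n * t) • x n)
        = Real.exp (-lam 0 * t) • x 0 + ∑' n : ℕ, Real.exp (-lam (n+1) * t) • x (n+1) :=
      Summable.tsum_eq_zero_add sxv
    have hshift : Summable (fun n => ‖x (n+1)‖ * Real.exp (-lam (n+1) * t)) :=
      (summable_nat_add_iff 1).2 sx
    have hnorm1 : ‖∑' n : ℕ, Real.exp (-lam (n+1) * t) • x (n+1)‖
        ≤ ∑' n : ℕ, ‖x (n+1)‖ * Real.exp (-lam (n+1) * t) := by
      refine le_trans (norm_tsum_le_tsum_norm ?_) ?_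
      · simpa [norm_smul, Real.abs_exp, mul_comm] using hshift
      · refine le_of_eq (tsum_congr fun n => ?_)
        simp [norm_smul, Real.abs_exp, mul_comm]
    -- lower bound on ‖x 0‖ exp(-lam 0 * t)
    have hlow : ‖x 0‖ * Real.exp (-lam 0 * t)
        ≤ ‖∑' n : ℕ, Real.exp (-lam n * t) • x n‖
          + ∑' n : ℕ, ‖x (n+1)‖ * Real.exp (-lam (n+1) * t) := by
      have : Real.exp (-lam 0 * t) • x 0
          = (∑' n : ℕ, Real.exp (-lam n * t) • x n)
            - ∑' n : ℕ, Real.exp (-lam (n+1) * t) • x (n+1) := by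
        rw [hsplit]; abel
      calc ‖x 0‖ * Real.exp (-lam 0 * t) = ‖Real.exp (-lam 0 * t) • x 0‖ := by
            simp [norm_smul, Real.abs_exp, mul_comm]
        _ ≤ ‖∑' n : ℕ, Real.exp (-lam n * t) • x n‖
            + ‖∑' n : ℕ, Real.exp (-lam (n+1) * t) • x (n+1)‖ := by
            rw [this]; exact norm_sub_le _ _
        _ ≤ _ := by linarith [hnorm1]
    -- bound the y-sum
    have hybound : ‖∑' n : ℕ, Real.exp (-μ n * t) • y n‖
        ≤ C * Real.exp (-c * (t - 1)) := by
      have h1 : ‖∑' n : ℕ, Real.exp (-μ n * t) • y n‖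
          ≤ ∑' n : ℕ, ‖y n‖ * Real.exp (-μ n * t) := by
        refine le_trans (norm_tsum_le_tsum_norm ?_) ?_
        · simpa [norm_smul, Real.abs_exp, mul_comm] using syt
        · refine le_of_eq (tsum_congr fun n => ?_)
          simp [norm_smul, Real.abs_exp, mul_comm]
      have h2 : ∑' n : ℕ, ‖y n‖ * Real.exp (-μ n * t)
          ≤ ∑' n : ℕ, (‖y n‖ * Real.exp (-μ n * 1)) * Real.exp (-c * (t - 1)) := by
        refine Summable.tsum_le_tsum (fun n => ?_) syt (sy1.mul_right _)
        have hμ : -μ n * t = -μ n * 1 + (-μ n * (t - 1)) := by ring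
        rw [hμ, Real.exp_add, ← mul_assoc]
        refine mul_le_mul_of_nonneg_left ?_
          (mul_nonneg (norm_nonneg _) (Real.exp_pos _).le)
        exact Real.exp_le_exp.2 (by nlinarith [hcμ n, sub_nonneg.2 ht1])
      rw [tsum_mul_right] at h2
      exact le_trans h1 h2
    -- relation between g t and the shifted x-sum
    have hgsum : Summable (fun n => ‖x n‖ * Real.exp (-(lam n - lam 0) * t)) := by
      have := sx.mul_left (Real.exp (lam 0 * t))
      refine this.congr fun n => ?_
      rw [mul_left_comm, ← Real.exp_add]
      ring_nf
    have hgsplit : g t = ‖x 0‖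
        + ∑' n : ℕ, ‖x (n+1)‖ * Real.exp (-(lam (n+1) - lam 0) * t) := by
      show (∑' n : ℕ, ‖x n‖ * Real.exp (-(lam n - lam 0) * t)) = _
      rw [Summable.tsum_eq_zero_add hgsum]
      simp
    have hshiftg : (∑' n : ℕ, ‖x (n+1)‖ * Real.exp (-(lam (n+1) - lam 0) * t))
        = Real.exp (lam 0 * t) * ∑' n : ℕ, ‖x (n+1)‖ * Real.exp (-lam (n+1) * t) := by
      rw [← tsum_mul_left]
      refine tsum_congr fun n => ?_
      rw [mul_left_comm, ← Real.exp_add]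
      ring_nf
    -- combine: multiply hlow by exp(lam 0 * t)
    have hE : (0:ℝ) < Real.exp (lam 0 * t) := Real.exp_pos _
    have heqt := heq t htS
    have main : ‖x 0‖ ≤ Real.exp (lam 0 * t) * (C * Real.exp (-c * (t - 1)))
        + (g t - ‖x 0‖) := by
      have h3 : ‖x 0‖ * Real.exp (-lam 0 * t) * Real.exp (lam 0 * t) = ‖x 0‖ := by
        rw [mul_assoc, ← Real.exp_add]; simp
      have h4 := mul_le_mul_of_nonneg_left hlow hE.le
      rw [mul_add] at h4
      have h5 : Real.exp (lam 0 * t) * (‖x 0‖ * Real.exp (-lam 0 * t)) = ‖x 0‖ := by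
        rw [mul_comm] at h3 ⊢; linarith [h3]
      rw [h5] at h4
      have h6 : Real.exp (lam 0 * t)
            * (∑' n : ℕ, ‖x (n+1)‖ * Real.exp (-lam (n+1) * t))
          = g t - ‖x 0‖ := by
        rw [hgsplit, ← hshiftg]; ring
      rw [h6] at h4
      refine le_trans h4 ?_
      gcongr
      rw [heqt]
      exact hybound
    have h7 : Real.exp (lam 0 * t) * (C * Real.exp (-c * (t - 1)))
        = D * Real.exp ((lam 0 - c) * t) := by
      rw [hD, mul_assoc, ← Real.exp_add, mul_comm C, ← mul_assoc, ← Real.exp_add]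
      ring_nf
    rw [h7] at main
    linarith
  -- choose a sequence in S tending to infinity
  choose ts hts htgt using fun k : ℕ => hSunb (k : ℝ)
  have htsTop : Tendsto ts atTop atTop :=
    tendsto_atTop_mono (fun k => (htgt k).le) tendsto_natCast_atTop_atTop
  have hlim : Tendsto (fun k => D * Real.exp ((lam 0 - c) * ts k) + g (ts k))
      atTop (nhds (D * 0 + ‖x 0‖)) := by
    refine Tendsto.add (Tendsto.const_mul D ?_) (hconv.comp htsTop)
    refine Real.tendsto_exp_atBot.comp ?_
    exact (tendsto_const_mul_atBot_of_neg (by linarith)).2 htsTop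
  have hineq : 2 * ‖x 0‖ ≤ D * 0 + ‖x 0‖ := by
    refine ge_of_tendsto hlim ?_
    filter_upwards [htsTop.eventually_ge_atTop 1] with k hk
    exact key (ts k) (hts k) hk
  have : ‖x 0‖ ≤ 0 := by linarith
  exact norm_le_zero_iff.1 this
end

section
/- Let θ ∈ [1,2), ν_θ = (θ−1)/(2−θ), k_θ = (2−θ)/2, a ∈ (0,1), and λ > 0. Define φ: (a,1] → ℝ by φ(x) = y^{(1−θ)/2} Ψ( (2/(2−θ)) √λ ((1−a)y)^{(2−θ)/2} ) with y = (x−a)/(1−a). If Ψ solves the Bessel equation z²Ψ'' + zΨ' + (z² − ν_θ²)Ψ = 0, then φ solves −((x−a)^θ φ'(x))' = λ φ(x) on (a,1). -/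
theorem degenerate_eigen_from_bessel
    (θ : ℝ) (hθ : θ ∈ Set.Ico (1 : ℝ) 2)
    (νθ kθ : ℝ) (hν : νθ = (θ - 1) / (2 - θ)) (hk : kθ = (2 - θ) / 2)
    (a lam : ℝ) (ha : a ∈ Set.Ioo (0 : ℝ) 1) (hlam : 0 < lam)
    (Ψ : ℝ → ℝ) (hΨ : ContDiff ℝ 2 Ψ)
    (hbessel : ∀ z : ℝ, 0 < z →
      z ^ 2 * deriv (deriv Ψ) z + z * deriv Ψ z + (z ^ 2 - νθ ^ 2) * Ψ z = 0)
    (φ : ℝ → ℝ)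
    (hφ : ∀ x ∈ Set.Ioo a 1,
      φ x = ((x - a) / (1 - a)) ^ ((1 - θ) / 2) *
        Ψ ((2 / (2 - θ)) * Real.sqrt lam * ((1 - a) * ((x - a) / (1 - a))) ^ ((2 - θ) / 2))) :
    ∀ x ∈ Set.Ioo a 1,
      -deriv (fun x : ℝ => (x - a) ^ θ * deriv φ x) x = lam * φ x := by
  obtain ⟨hθ1, hθ2⟩ := hθ
  obtain ⟨ha0, ha1⟩ := ha
  have h2θ : (0:ℝ) < 2 - θ := by linarith
  have h1a : (0:ℝ) < 1 - a := by linarith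
  have hs : (0:ℝ) < Real.sqrt lam := Real.sqrt_pos.mpr hlam
  set s : ℝ := Real.sqrt lam with hsdef
  set c : ℝ := 2 / (2 - θ) * s with hcdef
  have hc0 : 0 < c := by positivity
  set C : ℝ := (1 - a) ^ (-((1 - θ) / 2)) with hCdef
  have hφF : ∀ y ∈ Set.Ioo a 1, φ y =
      C * ((y - a) ^ ((1-θ)/2) * Ψ (c * (y - a) ^ ((2-θ)/2))) := by
    intro y hy
    have hya : 0 < y - a := sub_pos.2 hy.1
    rw [hφ y hy]
    have h1 : (1 - a) * ((y - a) / (1 - a)) = y - a := by field_simp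
    rw [h1]
    have h2 : ((y - a)/(1-a)) ^ ((1-θ)/2) = (y-a)^((1-θ)/2) * C := by
      rw [Real.div_rpow hya.le h1a.le, hCdef, Real.rpow_neg h1a.le, div_eq_mul_inv]
    rw [h2, hcdef, hsdef]; ring
  have hΨd : Differentiable ℝ Ψ := hΨ.differentiable (by norm_num)
  have hΨ'd : Differentiable ℝ (deriv Ψ) := by
    have h2 : ContDiff ℝ (1+1) Ψ := by norm_num; exact hΨ
    exact ((contDiff_succ_iff_deriv.mp h2).2.2).differentiable (by norm_num)
  have hzD : ∀ y ∈ Set.Ioo a 1, HasDerivAt (fun w : ℝ => c * (w - a) ^ ((2-θ)/2))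
      (c * (1 * ((2-θ)/2) * (y - a) ^ ((2-θ)/2 - 1))) y := by
    intro y hy
    have hya : 0 < y - a := sub_pos.2 hy.1
    have h1 : HasDerivAt (fun w : ℝ => w - a) 1 y := (hasDerivAt_id y).sub_const a
    exact (h1.rpow_const (Or.inl hya.ne')).const_mul c
  have hFD : ∀ y ∈ Set.Ioo a 1, HasDerivAt
      (fun w => C * ((w - a) ^ ((1-θ)/2) * Ψ (c * (w - a) ^ ((2-θ)/2))))
      (C * ((1 * ((1-θ)/2) * (y - a) ^ ((1-θ)/2 - 1)) * Ψ (c * (y - a) ^ ((2-θ)/2))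
        + (y - a) ^ ((1-θ)/2) *
          (deriv Ψ (c * (y - a) ^ ((2-θ)/2)) * (c * (1 * ((2-θ)/2) * (y - a) ^ ((2-θ)/2 - 1)))))) y := by
    intro y hy
    have hya : 0 < y - a := sub_pos.2 hy.1
    have h1 : HasDerivAt (fun w : ℝ => w - a) 1 y := (hasDerivAt_id y).sub_const a
    have h2 := h1.rpow_const (p := (1-θ)/2) (Or.inl hya.ne')
    have h3 := (hΨd (c * (y - a) ^ ((2-θ)/2))).hasDerivAt.comp y (hzD y hy)
    exact (h2.mul h3).const_mul C
  have hφ' : ∀ y ∈ Set.Ioo a 1, deriv φ y =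
      C * ((1 * ((1-θ)/2) * (y - a) ^ ((1-θ)/2 - 1)) * Ψ (c * (y - a) ^ ((2-θ)/2))
        + (y - a) ^ ((1-θ)/2) *
          (deriv Ψ (c * (y - a) ^ ((2-θ)/2)) * (c * (1 * ((2-θ)/2) * (y - a) ^ ((2-θ)/2 - 1))))) := by
    intro y hy
    have hev : φ =ᶠ[nhds y]
        (fun w => C * ((w - a) ^ ((1-θ)/2) * Ψ (c * (w - a) ^ ((2-θ)/2)))) :=
      Filter.eventuallyEq_of_mem (isOpen_Ioo.mem_nhds hy) hφF
    rw [hev.deriv_eq, (hFD y hy).deriv]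
  intro x hx
  have hxa : 0 < x - a := sub_pos.2 hx.1
  have hGH : (fun y : ℝ => (y - a) ^ θ * deriv φ y) =ᶠ[nhds x]
      (fun y : ℝ => (y - a) ^ θ *
        (C * ((1 * ((1-θ)/2) * (y - a) ^ ((1-θ)/2 - 1)) * Ψ (c * (y - a) ^ ((2-θ)/2))
        + (y - a) ^ ((1-θ)/2) *
          (deriv Ψ (c * (y - a) ^ ((2-θ)/2)) * (c * (1 * ((2-θ)/2) * (y - a) ^ ((2-θ)/2 - 1))))))) :=
    Filter.eventuallyEq_of_mem (isOpen_Ioo.mem_nhds hx) (fun y hy => by rw [hφ' y hy])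
  rw [hGH.deriv_eq, hφF x hx]
  -- build derivative of the explicit function
  have h1 : HasDerivAt (fun w : ℝ => w - a) 1 x := (hasDerivAt_id x).sub_const a
  have hA := h1.rpow_const (p := θ) (Or.inl hxa.ne')
  have hB1 := h1.rpow_const (p := (1-θ)/2 - 1) (Or.inl hxa.ne')
  have hB5 := h1.rpow_const (p := (1-θ)/2) (Or.inl hxa.ne')
  have hB4 := h1.rpow_const (p := (2-θ)/2 - 1) (Or.inl hxa.ne')
  have hB2 := (hΨd (c * (x - a) ^ ((2-θ)/2))).hasDerivAt.comp x (hzD x hx)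
  have hB3 := (hΨ'd (c * (x - a) ^ ((2-θ)/2))).hasDerivAt.comp x (hzD x hx)
  have hH' := hA.mul (((((hB1.const_mul (1 * ((1-θ)/2))).mul hB2).add
      (hB5.mul (hB3.mul ((hB4.const_mul (1 * ((2-θ)/2))).const_mul c))))).const_mul C)
  have hH2 : HasDerivAt (fun y : ℝ => (y - a) ^ θ *
        (C * ((1 * ((1-θ)/2) * (y - a) ^ ((1-θ)/2 - 1)) * Ψ (c * (y - a) ^ ((2-θ)/2))
        + (y - a) ^ ((1-θ)/2) *
          (deriv Ψ (c * (y - a) ^ ((2-θ)/2)) * (c * (1 * ((2-θ)/2) * (y - a) ^ ((2-θ)/2 - 1))))))) _ x := hH'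
  rw [hH2.deriv]
  simp only [Function.comp_apply, Pi.mul_apply, Pi.add_apply]
  have estep : ∀ p : ℝ, (x-a)^p = (x-a)^(p-1) * (x-a) := by
    intro p
    have h := Real.rpow_add hxa (p-1) 1
    rw [Real.rpow_one] at h
    rw [← h]; congr 1; ring
  have hz0 : 0 < c * (x - a) ^ ((2-θ)/2) := mul_pos hc0 (Real.rpow_pos_of_pos hxa _)
  have hb := hbessel _ hz0
  have hνk : νθ * ((2-θ)/2) = (θ-1)/2 := by rw [hν]; field_simp
  have hc2 : (c * ((2-θ)/2))^2 = lam := by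
    have hcs : c * ((2-θ)/2) = s := by rw [hcdef]; field_simp
    rw [hcs, hsdef]; exact Real.sq_sqrt hlam.le
  have hR6 : (x-a)^(θ-1) * ((x-a)^((2-θ)/2-1-1) * (x-a)^((2-θ)/2-1-1)) * (x-a)^5 = (x-a)*(x-a) := by
    rw [show ((x-a))^(5:ℕ) = (x-a)^(((5:ℕ):ℝ)) from (Real.rpow_natCast _ 5).symm,
        ← Real.rpow_add hxa, ← Real.rpow_add hxa, ← Real.rpow_add hxa]
    rw [show (x-a)*(x-a) = (x-a)^((2:ℕ):ℝ) from by rw [Real.rpow_natCast]; ring]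
    congr 1
    push_cast; ring
  rw [estep ((2-θ)/2), estep ((2-θ)/2 - 1)] at hb
  rw [estep ((1-θ)/2), estep ((1-θ)/2 - 1), estep ((2-θ)/2), estep ((2-θ)/2 - 1), estep θ]
  linear_combination
    (-(C * (x-a)^(θ-1) * (x-a)^((1-θ)/2-1-1) * (x-a) * ((2-θ)/2)^2)) * hb
    + (-(C * (x-a)^(θ-1) * (x-a)^((1-θ)/2-1-1) * (x-a) *
        Ψ (c * ((x-a)^((2-θ)/2-1-1) * (x-a) * (x-a))) * (νθ*((2-θ)/2)+(θ-1)/2))) * hνk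
    + (C * (x-a)^(θ-1) * (x-a)^((1-θ)/2-1-1) * ((x-a)^((2-θ)/2-1-1))^2 * (x-a)^5 *
        Ψ (c * ((x-a)^((2-θ)/2-1-1) * (x-a) * (x-a)))) * hc2
    + (lam * C * (x-a)^((1-θ)/2-1-1) * Ψ (c * ((x-a)^((2-θ)/2-1-1) * (x-a) * (x-a)))) * hR6
end
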